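/- arXiv:1211.2193 — 7 statements merged into one kernel-verified Lean document; each statement's English description precedes it below -/
import Mathlib

section
/- For every complex number s with Re(s) > 0, there exists a unique complex number t = t(s) with Re(t) > Re(-s) satisfying λ·φ(s,t) = λ - (s+t), where φ(s,t) = E[e^{-sB¹ - tB²}] is the joint Laplace-Stieltjes transform of a pair of nonnegative random variables (B¹,B²) with P(B¹ ≥ B²) = 1 and P(B¹ > B²) > 0, and λ > 0. -/
/-!
Put `X = B¹ - B² ≥ 0`, `Y = B²` and `u = s + t`, so that `φ(s,t) = g(u) := E[e^{-sX - uY}]` and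
the equation reads `u = λ(1 - g(u))`, `Re u > 0`. With `a = Re s` and `c(r) = E[e^{-aX - rY}]` we
have `Re g(u) ≤ c(Re u)`, and `x e^{-x} ≤ 1 - e^{-x}` makes `g` Lipschitz with constant
`(c(0) - c(ε))/ε` on `Re u ≥ ε`. The map `ψ(r) = λ(1 - c(r))` is monotone with `ψ(0) > 0`
(because `P(X > 0) > 0`), so by Knaster–Tarski on `[0, λ]` it has a fixed point `r > 0`.
Whenever `ψ(ε) ≤ ε`, the Lipschitz constant of `λ g` on `Re u ≥ ε` is at most
`(ψ(ε) - ψ(0))/ε < 1`. Hence `u ↦ λ(1 - g(u))` contracts the half-plane `Re u ≥ r` into itself,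
which gives a solution; and every solution satisfies `ψ(Re u) ≤ Re u`, so two solutions are
both in the half-plane `Re u ≥ ε` of the smaller real part `ε`, where the contraction forces
them to coincide.
-/

open MeasureTheory Set
open scoped Real Complex

theorem exists_fixedPoint_of_monotoneOn_Icc {α : Type*} [ConditionallyCompleteLattice α]
    {f : α → α} {a b : α} (hab : a ≤ b) (hf : MonotoneOn f (Icc a b))
    (hmaps : MapsTo f (Icc a b) (Icc a b)) : ∃ x ∈ Icc a b, f x = x := by
  have : Fact (a ≤ b) := ⟨hab⟩
  let F : Icc a b →o Icc a b := ⟨hmaps.restrict f _ _, fun x y hxy => hf x.2 y.2 hxy⟩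
  exact ⟨F.gfp, F.gfp.2, congrArg Subtype.val F.map_gfp⟩

theorem norm_cexp_neg_mul_sub_mul (s u : ℂ) (x y : ℝ) :
    ‖cexp (-(s * x) - u * y)‖ = rexp (-(s.re * x) - u.re * y) := by
  simp [Complex.norm_exp]

theorem norm_cexp_neg_mul_sub_cexp_neg_mul_le {ε y : ℝ} (hε : 0 < ε) (hy : 0 ≤ y) {u v : ℂ}
    (hu : ε ≤ u.re) (hv : ε ≤ v.re) :
    ‖cexp (-(u * y)) - cexp (-(v * y))‖ ≤ (1 - rexp (-(ε * y))) / ε * ‖u - v‖ := by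
  have hderiv : ∀ z ∈ {z : ℂ | ε ≤ z.re}, HasDerivWithinAt (fun w => cexp (-(w * y)))
      (cexp (-(z * y)) * -y) {z : ℂ | ε ≤ z.re} z := fun z _ =>
    ((hasDerivAt_mul_const (y : ℂ)).neg.cexp).hasDerivWithinAt
  have hbound : ∀ z ∈ {z : ℂ | ε ≤ z.re}, ‖cexp (-(z * y)) * -y‖ ≤ rexp (-(ε * y)) * y := by
    intro z (hz : ε ≤ z.re)
    rw [norm_mul, norm_neg, Complex.norm_real, Real.norm_of_nonneg hy, Complex.norm_exp]
    gcongr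
    simpa using mul_le_mul_of_nonneg_right hz hy
  have hxexp : ε * y * rexp (-(ε * y)) ≤ 1 - rexp (-(ε * y)) := by
    have h := mul_le_mul_of_nonneg_left (Real.add_one_le_exp (ε * y)) (Real.exp_pos (-(ε * y))).le
    rw [← Real.exp_add, neg_add_cancel, Real.exp_zero] at h
    linarith
  calc ‖cexp (-(u * y)) - cexp (-(v * y))‖ ≤ rexp (-(ε * y)) * y * ‖u - v‖ :=
        (convex_halfSpace_re_ge ε).norm_image_sub_le_of_norm_hasDerivWithin_le hderiv hbound hv hu
    _ ≤ (1 - rexp (-(ε * y))) / ε * ‖u - v‖ := by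
        gcongr
        rw [le_div_iff₀ hε]
        linarith

section JointLaplace

variable {Ω : Type*} [MeasurableSpace Ω] {μ : Measure Ω} {X Y : Ω → ℝ}

variable (μ X Y) in
noncomputable def jointLaplace (s u : ℂ) : ℂ := ∫ ω, cexp (-(s * X ω) - u * Y ω) ∂μ

variable (μ X Y) in
noncomputable def jointLaplaceReal (a r : ℝ) : ℝ := ∫ ω, rexp (-(a * X ω) - r * Y ω) ∂μ

theorem integrable_cexp_neg_mul_sub_mul [IsFiniteMeasure μ] (hX : AEMeasurable X μ)
    (hY : AEMeasurable Y μ) (hX0 : ∀ᵐ ω ∂μ, 0 ≤ X ω) (hY0 : ∀ᵐ ω ∂μ, 0 ≤ Y ω) {s u : ℂ}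
    (hs : 0 ≤ s.re) (hu : 0 ≤ u.re) :
    Integrable (fun ω => cexp (-(s * X ω) - u * Y ω)) μ := by
  refine (integrable_const 1).mono' (by fun_prop) ?_
  filter_upwards [hX0, hY0] with ω hXω hYω
  rw [norm_cexp_neg_mul_sub_mul, Real.exp_le_one_iff]
  nlinarith [mul_nonneg hs hXω, mul_nonneg hu hYω]

theorem integrable_rexp_neg_mul_sub_mul [IsFiniteMeasure μ] (hX : AEMeasurable X μ)
    (hY : AEMeasurable Y μ) (hX0 : ∀ᵐ ω ∂μ, 0 ≤ X ω) (hY0 : ∀ᵐ ω ∂μ, 0 ≤ Y ω) {a r : ℝ}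
    (ha : 0 ≤ a) (hr : 0 ≤ r) :
    Integrable (fun ω => rexp (-(a * X ω) - r * Y ω)) μ := by
  simpa [norm_cexp_neg_mul_sub_mul] using
    (integrable_cexp_neg_mul_sub_mul hX hY hX0 hY0 (s := a) (u := r) ha hr).norm

theorem jointLaplaceReal_nonneg (a r : ℝ) : 0 ≤ jointLaplaceReal μ X Y a r :=
  integral_nonneg fun _ => (Real.exp_pos _).le

theorem re_jointLaplace_le (s u : ℂ) :
    (jointLaplace μ X Y s u).re ≤ jointLaplaceReal μ X Y s.re u.re :=
  calc (jointLaplace μ X Y s u).re ≤ ‖jointLaplace μ X Y s u‖ := Complex.re_le_norm _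
    _ ≤ ∫ ω, ‖cexp (-(s * X ω) - u * Y ω)‖ ∂μ := norm_integral_le_integral_norm _
    _ = jointLaplaceReal μ X Y s.re u.re := by simp only [norm_cexp_neg_mul_sub_mul]; rfl

theorem jointLaplaceReal_antitoneOn [IsFiniteMeasure μ] (hX : AEMeasurable X μ)
    (hY : AEMeasurable Y μ) (hX0 : ∀ᵐ ω ∂μ, 0 ≤ X ω) (hY0 : ∀ᵐ ω ∂μ, 0 ≤ Y ω) {a : ℝ}
    (ha : 0 ≤ a) : AntitoneOn (jointLaplaceReal μ X Y a) (Ici 0) := by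
  intro r₁ (hr₁ : 0 ≤ r₁) r₂ _ h
  refine integral_mono_ae (integrable_rexp_neg_mul_sub_mul hX hY hX0 hY0 ha (hr₁.trans h))
    (integrable_rexp_neg_mul_sub_mul hX hY hX0 hY0 ha hr₁) ?_
  filter_upwards [hY0] with ω hYω
  gcongr

theorem jointLaplaceReal_zero_lt_one [IsProbabilityMeasure μ] (hX : AEMeasurable X μ)
    (hY : AEMeasurable Y μ) (hX0 : ∀ᵐ ω ∂μ, 0 ≤ X ω) (hY0 : ∀ᵐ ω ∂μ, 0 ≤ Y ω) {a : ℝ}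
    (ha : 0 < a) (hXpos : 0 < μ {ω | 0 < X ω}) : jointLaplaceReal μ X Y a 0 < 1 := by
  have hint := integrable_rexp_neg_mul_sub_mul hX hY hX0 hY0 ha.le le_rfl
  have hpos : 0 < ∫ ω, (1 - rexp (-(a * X ω) - 0 * Y ω)) ∂μ := by
    have hint' : Integrable (fun ω => 1 - rexp (-(a * X ω) - 0 * Y ω)) μ :=
      (integrable_const 1).sub hint
    rw [integral_pos_iff_support_of_nonneg_ae _ hint']
    · refine hXpos.trans_le (measure_mono fun ω (hω : 0 < X ω) => ?_)
      have hlt : rexp (-(a * X ω) - 0 * Y ω) < 1 := by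
        rw [Real.exp_lt_one_iff]; nlinarith [mul_pos ha hω]
      exact (sub_pos.2 hlt).ne'
    · filter_upwards [hX0] with ω hXω
      simpa using mul_nonneg ha.le hXω
  rw [integral_sub (integrable_const 1) hint] at hpos
  simpa [jointLaplaceReal] using hpos

theorem norm_jointLaplace_sub_le [IsFiniteMeasure μ] (hX : AEMeasurable X μ)
    (hY : AEMeasurable Y μ) (hX0 : ∀ᵐ ω ∂μ, 0 ≤ X ω) (hY0 : ∀ᵐ ω ∂μ, 0 ≤ Y ω) {s : ℂ}
    (hs : 0 ≤ s.re) {ε : ℝ} (hε : 0 < ε) {u v : ℂ} (hu : ε ≤ u.re) (hv : ε ≤ v.re) :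
    ‖jointLaplace μ X Y s u - jointLaplace μ X Y s v‖ ≤
      (jointLaplaceReal μ X Y s.re 0 - jointLaplaceReal μ X Y s.re ε) / ε * ‖u - v‖ := by
  have hint0 := integrable_rexp_neg_mul_sub_mul hX hY hX0 hY0 hs le_rfl
  have hintε := integrable_rexp_neg_mul_sub_mul hX hY hX0 hY0 hs hε.le
  rw [jointLaplace, jointLaplace, ← integral_sub
    (integrable_cexp_neg_mul_sub_mul hX hY hX0 hY0 hs (hε.le.trans hu))
    (integrable_cexp_neg_mul_sub_mul hX hY hX0 hY0 hs (hε.le.trans hv))]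
  have hdiff : Integrable (fun ω => rexp (-(s.re * X ω) - 0 * Y ω) - rexp (-(s.re * X ω) - ε * Y ω))
      μ := hint0.sub hintε
  refine (norm_integral_le_of_norm_le ((hdiff.div_const ε).mul_const ‖u - v‖) ?_).trans
    (le_of_eq ?_)
  · filter_upwards [hY0] with ω hYω
    have hsplit : ∀ w : ℂ, cexp (-(s * X ω) - w * Y ω) = cexp (-(s * X ω)) * cexp (-(w * Y ω)) :=
      fun w => by rw [← Complex.exp_add]; ring_nf
    have hnorm : ‖cexp (-(s * X ω))‖ = rexp (-(s.re * X ω)) := by simp [Complex.norm_exp]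
    rw [hsplit, hsplit, ← mul_sub, norm_mul, hnorm]
    calc rexp (-(s.re * X ω)) * ‖cexp (-(u * Y ω)) - cexp (-(v * Y ω))‖
        ≤ rexp (-(s.re * X ω)) * ((1 - rexp (-(ε * Y ω))) / ε * ‖u - v‖) := by
          gcongr; exact norm_cexp_neg_mul_sub_cexp_neg_mul_le hε hYω hu hv
      _ = _ := by
          simp only [zero_mul, sub_eq_add_neg (-(s.re * X ω)), neg_zero, add_zero, Real.exp_add]
          ring
  · rw [integral_mul_const, integral_div, integral_sub hint0 hintε]
    rfl

end JointLaplace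

section FixedPointEquation

variable {g : ℂ → ℂ} {c : ℝ → ℝ} {lam : ℝ}

theorem le_re_of_mul_eq_sub (hre : ∀ u, (g u).re ≤ c u.re) (hlam : 0 ≤ lam) {u : ℂ}
    (hu : (lam : ℂ) * g u = lam - u) : lam * (1 - c u.re) ≤ u.re := by
  have h := congrArg Complex.re hu
  simp only [Complex.mul_re, Complex.ofReal_re, Complex.ofReal_im, zero_mul, sub_zero,
    Complex.sub_re] at h
  nlinarith [mul_le_mul_of_nonneg_left (hre u) hlam]

theorem mul_div_lt_one_of_mul_one_sub_le (hc0 : c 0 < 1) (hlam : 0 < lam) {ε : ℝ} (hε : 0 < ε)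
    (hψε : lam * (1 - c ε) ≤ ε) : lam * ((c 0 - c ε) / ε) < 1 := by
  rw [← mul_div_assoc, div_lt_one hε]
  nlinarith

theorem exists_pos_mul_one_sub_eq (hc0 : c 0 < 1) (hc : AntitoneOn c (Ici 0))
    (hc_nonneg : ∀ r, 0 ≤ c r) (hlam : 0 < lam) : ∃ r, 0 < r ∧ lam * (1 - c r) = r := by
  have hψ0 : 0 < lam * (1 - c 0) := mul_pos hlam (sub_pos.2 hc0)
  have hψ : MonotoneOn (fun r => lam * (1 - c r)) (Icc 0 lam) := fun x hx y hy hxy => by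
    have := hc hx.1 hy.1 hxy
    dsimp only
    gcongr
  have hψ_ge : ∀ r ∈ Icc 0 lam, lam * (1 - c 0) ≤ lam * (1 - c r) := fun r hr =>
    hψ (left_mem_Icc.2 hlam.le) hr hr.1
  obtain ⟨r, hr, hfix⟩ := exists_fixedPoint_of_monotoneOn_Icc hlam.le hψ fun r hr =>
    ⟨hψ0.le.trans (hψ_ge r hr), by nlinarith [hc_nonneg r]⟩
  exact ⟨r, hfix ▸ hψ0.trans_le (hψ_ge r hr), hfix⟩

theorem exists_le_re_mul_eq_sub (hre : ∀ u, (g u).re ≤ c u.re)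
    (hlip : ∀ ε > 0, ∀ u v : ℂ, ε ≤ u.re → ε ≤ v.re → ‖g u - g v‖ ≤ (c 0 - c ε) / ε * ‖u - v‖)
    (hc0 : c 0 < 1) (hc : AntitoneOn c (Ici 0)) (hlam : 0 < lam) {r : ℝ} (hr : 0 < r)
    (hψr : lam * (1 - c r) = r) : ∃ u : ℂ, r ≤ u.re ∧ (lam : ℂ) * g u = lam - u := by
  set S := {u : ℂ | r ≤ u.re}
  set F : ℂ → ℂ := fun u => lam - lam * g u
  have hF : ∀ u v, dist (F u) (F v) = lam * ‖g u - g v‖ := fun u v => by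
    rw [dist_eq_norm, show F u - F v = lam * (g v - g u) by ring, norm_mul, Complex.norm_real,
      Real.norm_of_nonneg hlam.le, norm_sub_rev]
  have hFS : MapsTo F S S := fun u (hu : r ≤ u.re) => by
    have hre_F : (F u).re = lam - lam * (g u).re := by simp [F]
    show r ≤ (F u).re
    nlinarith [hre u, hc hr.le (hr.le.trans hu) hu]
  have hcontr : ContractingWith (lam * ((c 0 - c r) / r)).toNNReal (hFS.restrict F S S) := by
    refine ⟨Real.toNNReal_lt_one.2 (mul_div_lt_one_of_mul_one_sub_le hc0 hlam hr hψr.le),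
      LipschitzWith.of_dist_le' fun u v => ?_⟩
    rw [Subtype.dist_eq, MapsTo.val_restrict_apply, MapsTo.val_restrict_apply, hF, mul_assoc,
      Subtype.dist_eq, dist_eq_norm]
    exact mul_le_mul_of_nonneg_left (hlip r hr u v u.2 v.2) hlam.le
  have hrS : (r : ℂ) ∈ S := by simp [S]
  obtain ⟨u, hu, hfix, -⟩ := hcontr.exists_fixedPoint'
    (isClosed_le continuous_const Complex.continuous_re).isComplete hFS hrS (edist_ne_top _ _)
  have hFu : (lam : ℂ) - lam * g u = u := hfix
  exact ⟨u, hu, by linear_combination -hFu⟩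

theorem eq_of_mul_eq_sub (hre : ∀ u, (g u).re ≤ c u.re)
    (hlip : ∀ ε > 0, ∀ u v : ℂ, ε ≤ u.re → ε ≤ v.re → ‖g u - g v‖ ≤ (c 0 - c ε) / ε * ‖u - v‖)
    (hc0 : c 0 < 1) (hlam : 0 < lam) {u v : ℂ} (hu0 : 0 < u.re) (hv0 : 0 < v.re)
    (hu : (lam : ℂ) * g u = lam - u) (hv : (lam : ℂ) * g v = lam - v) : u = v := by
  wlog huv : u.re ≤ v.re generalizing u v
  · exact (this hv0 hu0 hv hu (le_of_not_ge huv)).symm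
  have hK := mul_div_lt_one_of_mul_one_sub_le hc0 hlam hu0 (le_re_of_mul_eq_sub hre hlam.le hu)
  have hle : ‖u - v‖ ≤ lam * ((c 0 - c u.re) / u.re) * ‖u - v‖ :=
    calc ‖u - v‖ = lam * ‖g u - g v‖ := by
          rw [show u - v = lam * (g v - g u) by linear_combination hu - hv, norm_mul,
            Complex.norm_real, Real.norm_of_nonneg hlam.le, norm_sub_rev]
      _ ≤ lam * ((c 0 - c u.re) / u.re * ‖u - v‖) :=
          mul_le_mul_of_nonneg_left (hlip _ hu0 u v le_rfl huv) hlam.le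
      _ = _ := by ring
  exact sub_eq_zero.1 (norm_le_zero_iff.1 (by nlinarith [norm_nonneg (u - v)]))

theorem existsUnique_re_pos_mul_eq_sub (hre : ∀ u, (g u).re ≤ c u.re)
    (hlip : ∀ ε > 0, ∀ u v : ℂ, ε ≤ u.re → ε ≤ v.re → ‖g u - g v‖ ≤ (c 0 - c ε) / ε * ‖u - v‖)
    (hc0 : c 0 < 1) (hc : AntitoneOn c (Ici 0)) (hc_nonneg : ∀ r, 0 ≤ c r) (hlam : 0 < lam) :
    ∃! u : ℂ, 0 < u.re ∧ (lam : ℂ) * g u = lam - u := by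
  obtain ⟨r, hr, hψr⟩ := exists_pos_mul_one_sub_eq hc0 hc hc_nonneg hlam
  obtain ⟨u, hru, hu⟩ := exists_le_re_mul_eq_sub hre hlip hc0 hc hlam hr hψr
  exact ⟨u, ⟨hr.trans_le hru, hu⟩, fun v ⟨hv0, hv⟩ =>
    eq_of_mul_eq_sub hre hlip hc0 hlam hv0 (hr.trans_le hru) hv hu⟩

end FixedPointEquation

theorem stmt0_general {Ω : Type*} [MeasurableSpace Ω] (μ : Measure Ω) [IsProbabilityMeasure μ]
    (B1 B2 : Ω → ℝ) (hB1m : Measurable B1) (hB2m : Measurable B2)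
    (hB2 : ∀ ω, 0 ≤ B2 ω)
    (hord : ∀ᵐ ω ∂μ, B2 ω ≤ B1 ω)
    (hstrict : 0 < μ {ω | B2 ω < B1 ω})
    (lam : ℝ) (hlam : 0 < lam)
    (φ : ℂ → ℂ → ℂ)
    (hφ : ∀ s t : ℂ, φ s t = ∫ ω, Complex.exp (-(s * B1 ω) - t * B2 ω) ∂μ)
    (s : ℂ) (hs : 0 < s.re) :
    ∃! t : ℂ, (-s).re < t.re ∧ (lam : ℂ) * φ s t = (lam : ℂ) - (s + t) := by
  set X : Ω → ℝ := fun ω => B1 ω - B2 ω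
  have hX : AEMeasurable X μ := (hB1m.sub hB2m).aemeasurable
  have hX0 : ∀ᵐ ω ∂μ, 0 ≤ X ω := hord.mono fun _ => sub_nonneg.2
  have hXpos : 0 < μ {ω | 0 < X ω} := by simpa [X] using hstrict
  have hY0 : ∀ᵐ ω ∂μ, 0 ≤ B2 ω := .of_forall hB2
  have hφX : ∀ t, φ s t = jointLaplace μ X B2 s (s + t) := fun t => by
    rw [hφ, jointLaplace]
    congr 1 with ω
    push_cast [X]
    ring_nf
  obtain ⟨u, ⟨hu0, hu⟩, huniq⟩ := existsUnique_re_pos_mul_eq_sub (re_jointLaplace_le s)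
    (fun ε hε _ _ => norm_jointLaplace_sub_le hX hB2m.aemeasurable hX0 hY0 hs.le hε)
    (jointLaplaceReal_zero_lt_one hX hB2m.aemeasurable hX0 hY0 hs hXpos)
    (jointLaplaceReal_antitoneOn hX hB2m.aemeasurable hX0 hY0 hs.le)
    (jointLaplaceReal_nonneg _) hlam
  refine ⟨u - s, ⟨by simp [hu0], by rwa [hφX, add_sub_cancel]⟩, fun t ⟨ht0, ht⟩ => ?_⟩
  have hst := huniq (s + t) ⟨by simp at ht0 ⊢; linarith, hφX t ▸ ht⟩
  rw [← hst, add_sub_cancel_left]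

/-- Rouché lemma (Lemma 1 in the paper): for every `s` with `Re s > 0` there is a unique
`t = t(s)` with `Re t > Re (-s)` satisfying `λ φ(s,t) = λ - (s+t)`, where
`φ(s,t) = E[exp (-s B¹ - t B²)]`, `B¹ ≥ B²` a.s. and `P(B¹ > B²) > 0`, `λ > 0`. -/
theorem stmt0 {Ω : Type*} [MeasurableSpace Ω] (μ : Measure Ω) [IsProbabilityMeasure μ]
    (B1 B2 : Ω → ℝ) (hB1m : Measurable B1) (hB2m : Measurable B2)
    (hB1 : ∀ ω, 0 ≤ B1 ω) (hB2 : ∀ ω, 0 ≤ B2 ω)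
    (hord : ∀ᵐ ω ∂μ, B2 ω ≤ B1 ω)
    (hstrict : 0 < μ {ω | B2 ω < B1 ω})
    (lam : ℝ) (hlam : 0 < lam)
    (φ : ℂ → ℂ → ℂ)
    (hφ : ∀ s t : ℂ, φ s t = ∫ ω, Complex.exp (-(s * B1 ω) - t * B2 ω) ∂μ)
    (s : ℂ) (hs : 0 < s.re) :
    ∃! t : ℂ, (-s).re < t.re ∧ (lam : ℂ) * φ s t = (lam : ℂ) - (s + t) :=
  stmt0_general μ B1 B2 hB1m hB2m hB2 hord hstrict lam hlam φ hφ s hs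
end

section
/- Path-wise duality for the two-dimensional risk model: for every N ≥ 1 and all u₁, u₂ ≥ 0, the event {V⁽¹⁾_N > u₁ and V⁽²⁾_N > u₂} equals the event {τ⁽¹⁾(u₁) ≤ σ_N and τ⁽²⁾(u₂) ≤ σ_N}, where V⁽ⁱ⁾_N is the workload seen by the N-th customer in an initially empty queue fed with the time-reversed arrival and service sequence of the risk process, and τ⁽ⁱ⁾(uᵢ) is the time of ruin of book i with initial capital uᵢ. -/
open Finset in
private lemma dual_aux (N : ℕ) (hN : 1 ≤ N) (u : ℝ) (hu : 0 ≤ u)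
    (A B : ℕ → ℝ) (hA : ∀ n, 0 < A n) (hB : ∀ n, 0 ≤ B n)
    (σ : ℕ → ℝ) (hσ0 : σ 0 = 0) (hσ : ∀ n, σ (n + 1) = σ n + A (n + 1))
    (R : ℝ → ℝ)
    (hR : ∀ x : ℝ, R x = u + x - ∑ j ∈ Finset.Icc 1 N, if σ j ≤ x then B j else 0)
    (V : ℕ → ℝ) (hV0 : V 0 = 0)
    (hV : ∀ n < N, V (n + 1) = max (V n + B (N - n) - A (N - n)) 0) :
    u < V N ↔ ∃ x : ℝ, 0 < x ∧ x ≤ σ N ∧ R x < 0 := by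
  classical
  set T : ℕ → ℝ := fun n => (∑ j ∈ Icc 1 n, B j) - σ n with hT
  have hσmono : StrictMono σ := strictMono_nat_of_lt_succ (fun n => by
    rw [hσ]; linarith [hA (n + 1)])
  have hσle : ∀ m n : ℕ, m ≤ n → σ m ≤ σ n := fun m n h => hσmono.monotone h
  have hσpos : ∀ n : ℕ, 1 ≤ n → 0 < σ n := fun n h => by
    have := hσmono (show 0 < n from h); rwa [hσ0] at this
  have hT0 : T 0 = 0 := by simp [hT, hσ0]
  have hTsucc : ∀ n : ℕ, T (n + 1) = T n + (B (n + 1) - A (n + 1)) := by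
    intro n
    have hs : (∑ j ∈ Icc 1 (n + 1), B j) = (∑ j ∈ Icc 1 n, B j) + B (n + 1) :=
      Finset.sum_Icc_succ_top (Nat.succ_le_succ (Nat.zero_le n)) B
    simp only [hT, hs, hσ n]; ring
  have hne : ∀ k : ℕ, (Icc (N - k) N).Nonempty := fun k => Finset.nonempty_Icc.2 (Nat.sub_le N k)
  have key : ∀ k, k ≤ N → V k = (Icc (N - k) N).sup' (hne k) T - T (N - k) := by
    intro k
    induction k with
    | zero =>
      intro _
      simp [hV0, Finset.Icc_self]
    | succ k ih =>
      intro hk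
      have hkN : k < N := hk
      have ihv := ih hkN.le
      have h1 : N - k = (N - (k + 1)) + 1 := by omega
      have hBA : B (N - k) - A (N - k) = T (N - k) - T (N - (k + 1)) := by
        rw [h1, hTsucc]; ring
      have hIcc : Icc (N - (k + 1)) N = insert (N - (k + 1)) (Icc (N - k) N) := by
        ext j; simp only [mem_Icc, mem_insert]; omega
      have hs' : (Icc (N - (k + 1)) N).sup' (hne (k + 1)) T
          = T (N - (k + 1)) ⊔ (Icc (N - k) N).sup' (hne k) T := by
        exact (Finset.sup'_congr (hne (k + 1)) hIcc (fun (_ : ℕ) _ => (rfl : T _ = T _))).trans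
          (Finset.sup'_insert (hne k) T)
      rw [hV k hkN, ihv, hs']
      have h2 : (Icc (N - k) N).sup' (hne k) T - T (N - k) + B (N - k) - A (N - k)
          = (Icc (N - k) N).sup' (hne k) T - T (N - (k + 1)) := by linarith [hBA]
      rw [h2, ← max_sub_sub_right (T (N - (k + 1))) ((Icc (N - k) N).sup' (hne k) T)
        (T (N - (k + 1))), sub_self]
      exact (sup_comm _ _)
  have hne0 : (Icc 0 N).Nonempty := Finset.nonempty_Icc.2 (Nat.zero_le N)
  have hVN : V N = (Icc 0 N).sup' hne0 T := by
    have h := key N le_rfl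
    simp only [Nat.sub_self, hT0, sub_zero] at h
    exact h
  have hsum : ∀ n : ℕ, n ≤ N → ∀ x : ℝ, (∀ j ∈ Icc 1 N, (σ j ≤ x ↔ j ≤ n)) →
      (∑ j ∈ Icc 1 N, if σ j ≤ x then B j else 0) = ∑ j ∈ Icc 1 n, B j := by
    intro n hn x hiff
    have h1 : (∑ j ∈ Icc 1 N, if σ j ≤ x then B j else 0)
        = ∑ j ∈ Icc 1 N, if j ≤ n then B j else 0 :=
      Finset.sum_congr rfl (fun j hj => if_congr (hiff j hj) rfl rfl)
    rw [h1, Finset.sum_ite, Finset.sum_const_zero, add_zero]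
    congr 1
    ext j
    simp only [Finset.mem_filter, mem_Icc]
    omega
  constructor
  · rintro h
    rw [hVN] at h
    obtain ⟨n, hn, hun⟩ := (Finset.lt_sup'_iff _).1 h
    rw [mem_Icc] at hn
    have hn1 : 1 ≤ n := by
      by_contra hc
      have hn0 : n = 0 := by omega
      rw [hn0, hT0] at hun
      linarith
    refine ⟨σ n, hσpos n hn1, hσle n N hn.2, ?_⟩
    rw [hR, hsum n hn.2 (σ n) (fun j hj => ⟨fun h => by
        by_contra hc
        exact absurd (hσmono (by omega : n < j)) (not_lt.2 h),
      fun h => hσle j n h⟩)]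
    simp only [hT] at hun
    linarith
  · rintro ⟨x, hx0, hxN, hxR⟩
    set n := Nat.findGreatest (fun j => σ j ≤ x) N with hn
    have hP0 : σ 0 ≤ x := by rw [hσ0]; linarith
    have hnN : n ≤ N := Nat.findGreatest_le N
    have hPn : σ n ≤ x := by
      rw [hn]
      exact Nat.findGreatest_spec (P := fun j => σ j ≤ x) (Nat.zero_le N) hP0
    have hiff : ∀ j ∈ Icc 1 N, (σ j ≤ x ↔ j ≤ n) := by
      intro j hj
      rw [mem_Icc] at hj
      constructor
      · intro h
        rw [hn]
        exact Nat.le_findGreatest (P := fun j => σ j ≤ x) hj.2 h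
      · intro h; exact le_trans (hσle j n h) hPn
    rw [hR, hsum n hnN x hiff] at hxR
    have hn1 : 1 ≤ n := by
      by_contra hc
      have hn0 : n = 0 := by omega
      rw [hn0] at hxR
      simp at hxR
      linarith
    rw [hVN, Finset.lt_sup'_iff hne0]
    exact ⟨n, mem_Icc.2 ⟨Nat.zero_le n, hnN⟩, by simp only [hT]; linarith⟩

/-- Path-wise duality (Lemma 1(a) in the paper): the N-th workload of the dual
(time-reversed) Lindley recursion exceeds `uᵢ` in both coordinates iff both books of the
risk process are ruined by time `σ_N`. Ruin of book `i` by time `T` is the event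
`∃ t ∈ (0,T], Rᵢ(t) < 0`. -/
theorem stmt3 (N : ℕ) (hN : 1 ≤ N) (u1 u2 : ℝ) (hu1 : 0 ≤ u1) (hu2 : 0 ≤ u2)
    (A B1 B2 : ℕ → ℝ) (hA : ∀ n, 0 < A n) (hB1 : ∀ n, 0 ≤ B1 n) (hB2 : ∀ n, 0 ≤ B2 n)
    (σ : ℕ → ℝ) (hσ0 : σ 0 = 0) (hσ : ∀ n, σ (n + 1) = σ n + A (n + 1))
    (R1 R2 : ℝ → ℝ)
    (hR1 : ∀ x : ℝ, R1 x = u1 + x - ∑ j ∈ Finset.Icc 1 N, if σ j ≤ x then B1 j else 0)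
    (hR2 : ∀ x : ℝ, R2 x = u2 + x - ∑ j ∈ Finset.Icc 1 N, if σ j ≤ x then B2 j else 0)
    (V1 V2 : ℕ → ℝ) (hV10 : V1 0 = 0) (hV20 : V2 0 = 0)
    (hV1 : ∀ n < N, V1 (n + 1) = max (V1 n + B1 (N - n) - A (N - n)) 0)
    (hV2 : ∀ n < N, V2 (n + 1) = max (V2 n + B2 (N - n) - A (N - n)) 0) :
    (u1 < V1 N ∧ u2 < V2 N) ↔
      ((∃ x : ℝ, 0 < x ∧ x ≤ σ N ∧ R1 x < 0) ∧ (∃ x : ℝ, 0 < x ∧ x ≤ σ N ∧ R2 x < 0)) := by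
  exact and_congr
    (dual_aux N hN u1 hu1 A B1 hA hB1 σ hσ0 hσ R1 hR1 V1 hV10 hV1)
    (dual_aux N hN u2 hu2 A B2 hA hB2 σ hσ0 hσ R2 hR2 V2 hV20 hV2)
end

section
/- Stationary functional equation: if (V¹,V²) is a stationary solution of the two-dimensional Lindley recursion with simultaneous Poisson(λ) arrivals and ordered service times B¹ ≥ B² a.s., then its LST ψ satisfies (1 - λφ(s,t)/(λ-s-t))·ψ(s,t) = (λ/(λ-s) - λ/(λ-s-t))·φ(s,λ-s)ψ(s,λ-s) + (1 - λ/(λ-s))·φ(λ,0)ψ(λ,0), for s,t > 0 with s ≠ λ and s+t ≠ λ. -/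
open MeasureTheory ProbabilityTheory Real Set

/-!
Put `W = V + B`. Stationarity gives `ψ(s,t) = E[exp(-s(W¹-A)⁺ - t(W²-A)⁺)]`, and since `A` is
independent of `W` one may integrate out `A ~ Exp(λ)` first. For fixed `w` with `0 ≤ w² ≤ w¹`
the integral over `a` splits at `w²` and `w¹` into three elementary exponential integrals, which
combine into a linear combination of `e^{-λw¹}`, `e^{-sw¹-(λ-s)w²}` and `e^{-sw¹-tw²}`. Taking
expectations, independence of `V` and `B` turns each `E[e^{-aW¹-bW²}]` into `ψ(a,b) φ(a,b)`.
-/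

noncomputable def laplaceKernel (s t : ℝ) (v : ℝ × ℝ) : ℝ := exp (-s * v.1 - t * v.2)

noncomputable def lindley (w : ℝ × ℝ) (a : ℝ) : ℝ × ℝ := (max (w.1 - a) 0, max (w.2 - a) 0)

lemma continuous_laplaceKernel (s t : ℝ) : Continuous (laplaceKernel s t) := by
  unfold laplaceKernel; fun_prop

lemma laplaceKernel_add (s t : ℝ) (v w : ℝ × ℝ) :
    laplaceKernel s t (v + w) = laplaceKernel s t v * laplaceKernel s t w := by
  simp only [laplaceKernel, Prod.fst_add, Prod.snd_add, ← exp_add]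
  ring_nf

lemma norm_laplaceKernel_le_one {s t : ℝ} {v : ℝ × ℝ} (h : 0 ≤ s * v.1 + t * v.2) :
    ‖laplaceKernel s t v‖ ≤ 1 := by
  rw [laplaceKernel, norm_of_nonneg (exp_pos _).le, exp_le_one_iff]
  linarith

lemma integral_expMeasure {r : ℝ} (hr : 0 < r) (f : ℝ → ℝ) :
    ∫ x, f x ∂expMeasure r = ∫ x in Ioi 0, r * exp (-(r * x)) * f x := by
  have hpdf : ∀ x, (exponentialPDFReal r x).toNNReal • f x
      = (Ici 0).indicator (fun x => r * exp (-(r * x)) * f x) x := fun x => by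
    rw [NNReal.smul_def, smul_eq_mul, Real.coe_toNNReal _ (exponentialPDFReal_nonneg hr x)]
    by_cases hx : 0 ≤ x <;> simp [hx, exponentialPDFReal, gammaPDFReal]
  have hdens : expMeasure r
      = volume.withDensity fun x => ((exponentialPDFReal r x).toNNReal : ENNReal) := rfl
  rw [hdens, integral_withDensity_eq_integral_smul (measurable_exponentialPDFReal r).real_toNNReal]
  simp_rw [hpdf]
  rw [integral_indicator measurableSet_Ici, integral_Ici_eq_integral_Ioi]

lemma integral_exp_mul {c : ℝ} (hc : c ≠ 0) (a b : ℝ) :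
    ∫ x in a..b, exp (c * x) = (exp (c * b) - exp (c * a)) / c := by
  rw [intervalIntegral.integral_comp_mul_left (fun x => exp x) hc, integral_exp, smul_eq_mul]
  field_simp

lemma integral_laplaceKernel_lindley_expMeasure {lam s t : ℝ} (hlam : 0 < lam) (hsl : s ≠ lam)
    (hstl : s + t ≠ lam) {w : ℝ × ℝ} (hw2 : 0 ≤ w.2) (hw : w.2 ≤ w.1) :
    ∫ a, laplaceKernel s t (lindley w a) ∂expMeasure lam
      = (1 - lam / (lam - s)) * laplaceKernel lam 0 w
        + (lam / (lam - s) - lam / (lam - s - t)) * laplaceKernel s (lam - s) w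
        + lam / (lam - s - t) * laplaceKernel s t w := by
  set F : ℝ → ℝ := fun x => lam * exp (-(lam * x)) * laplaceKernel s t (lindley w x) with hF
  have hFc : Continuous F := by
    simp only [hF, laplaceKernel, lindley]; fun_prop
  have hlow :
      EqOn F (fun x => lam * laplaceKernel s t w * exp ((s + t - lam) * x)) (uIcc 0 w.2) := by
    intro x hx
    rw [uIcc_of_le hw2] at hx
    simp only [hF, laplaceKernel, lindley, max_eq_left (sub_nonneg.2 (hx.2.trans hw)),
      max_eq_left (sub_nonneg.2 hx.2), mul_assoc, ← exp_add]
    ring_nf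
  have hmid : EqOn F (fun x => lam * exp (-s * w.1) * exp ((s - lam) * x)) (uIcc w.2 w.1) := by
    intro x hx
    rw [uIcc_of_le hw] at hx
    simp only [hF, laplaceKernel, lindley, max_eq_left (sub_nonneg.2 hx.2),
      max_eq_right (sub_nonpos.2 hx.1), mul_assoc, ← exp_add]
    ring_nf
  have hhigh : EqOn F (fun x => lam * exp (-lam * x)) (Ioi w.1) := by
    intro x (hx : w.1 < x)
    simp only [hF, laplaceKernel, lindley, max_eq_right (sub_nonpos.2 hx.le),
      max_eq_right (sub_nonpos.2 (hw.trans hx.le)), mul_zero, sub_zero, neg_zero, exp_zero,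
      mul_one, neg_mul]
  have hhigh_int : IntegrableOn F (Ioi w.1) :=
    IntegrableOn.congr_fun ((exp_neg_integrableOn_Ioi w.1 hlam).const_mul lam) hhigh.symm
      measurableSet_Ioi
  rw [integral_expMeasure hlam, ← intervalIntegral.integral_interval_add_Ioi'
      (hFc.intervalIntegrable 0 w.1) hhigh_int,
    ← intervalIntegral.integral_add_adjacent_intervals (hFc.intervalIntegrable 0 w.2)
      (hFc.intervalIntegrable w.2 w.1),
    intervalIntegral.integral_congr hlow, intervalIntegral.integral_congr hmid,
    setIntegral_congr_fun measurableSet_Ioi hhigh, intervalIntegral.integral_const_mul,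
    intervalIntegral.integral_const_mul, integral_const_mul,
    integral_exp_mul (sub_ne_zero.2 hstl), integral_exp_mul (sub_ne_zero.2 hsl),
    integral_exp_mul_Ioi (neg_lt_zero.2 hlam)]
  have hKlow : laplaceKernel s t w * exp ((s + t - lam) * w.2) = laplaceKernel s (lam - s) w := by
    rw [laplaceKernel, laplaceKernel, ← exp_add]; ring_nf
  have hKmid₁ : exp (-s * w.1) * exp ((s - lam) * w.1) = laplaceKernel lam 0 w := by
    rw [laplaceKernel, ← exp_add]; ring_nf
  have hKmid₂ : exp (-s * w.1) * exp ((s - lam) * w.2) = laplaceKernel s (lam - s) w := by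
    rw [laplaceKernel, ← exp_add]; ring_nf
  have hKhigh : exp (-lam * w.1) = laplaceKernel lam 0 w := by simp [laplaceKernel]
  have hstl' : lam - s - t ≠ 0 := by contrapose! hstl; linarith
  rw [mul_zero, exp_zero]
  linear_combination (norm := skip) lam / (s + t - lam) * hKlow + lam / (s - lam) * hKmid₁
    - lam / (s - lam) * hKmid₂ + hKhigh
  field_simp
  ring

section Probability

variable {Ω : Type*} [MeasurableSpace Ω] {μ : Measure Ω}

lemma map_eq_expMeasure_of_tail [IsProbabilityMeasure μ] {A : Ω → ℝ} (hA : Measurable A)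
    {r : ℝ} (hr : 0 < r) (hsurv : ∀ x : ℝ, 0 ≤ x → (μ {ω | x < A ω}).toReal = exp (-r * x)) :
    μ.map A = expMeasure r := by
  have := isProbabilityMeasure_expMeasure hr
  have := Measure.isProbabilityMeasure_map (μ := μ) hA.aemeasurable
  have hcdf : ∀ x, 0 ≤ x → μ.real (A ⁻¹' Iic x) = 1 - exp (-(r * x)) := fun x hx => by
    have hcompl : A ⁻¹' Iic x = {ω | x < A ω}ᶜ := by ext; simp
    rw [hcompl, probReal_compl_eq_one_sub (measurableSet_lt measurable_const hA), measureReal_def,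
      hsurv x hx, neg_mul]
  refine Measure.eq_of_cdf _ _ (StieltjesFunction.ext fun x => ?_)
  rw [cdf_eq_real, map_measureReal_apply hA measurableSet_Iic, cdf_expMeasure_eq hr]
  split_ifs with hx
  · exact hcdf x hx
  · have hle : μ.real (A ⁻¹' Iic x) ≤ μ.real (A ⁻¹' Iic 0) :=
      measureReal_mono (preimage_mono (Iic_subset_Iic.2 (not_le.1 hx).le))
    rw [hcdf 0 le_rfl, mul_zero, neg_zero, exp_zero, sub_self] at hle
    exact le_antisymm hle measureReal_nonneg

lemma ProbabilityTheory.IndepFun.integral_comp_eq_integral_integral [IsFiniteMeasure μ]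
    {α β : Type*} [MeasurableSpace α] [MeasurableSpace β] {X : Ω → α} {Y : Ω → β}
    (hXY : IndepFun X Y μ) (hX : Measurable X) (hY : Measurable Y) {f : α × β → ℝ}
    (hf : Integrable f ((μ.map X).prod (μ.map Y))) :
    ∫ ω, f (X ω, Y ω) ∂μ = ∫ ω, ∫ y, f (X ω, y) ∂(μ.map Y) ∂μ := by
  have hmap : μ.map (fun ω => (X ω, Y ω)) = (μ.map X).prod (μ.map Y) :=
    (indepFun_iff_map_prod_eq_prod_map_map hX.aemeasurable hY.aemeasurable).1 hXY
  rw [← integral_map (hX.prodMk hY).aemeasurable (hmap ▸ hf.aestronglyMeasurable), hmap,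
    integral_prod f hf, integral_map hX.aemeasurable hf.integral_prod_left.aestronglyMeasurable]

lemma ProbabilityTheory.IndepFun.integral_laplaceKernel_add {X Y : Ω → ℝ × ℝ}
    (hXY : IndepFun X Y μ) (hX : Measurable X) (hY : Measurable Y) (s t : ℝ) :
    ∫ ω, laplaceKernel s t (X ω + Y ω) ∂μ
      = (∫ ω, laplaceKernel s t (X ω) ∂μ) * ∫ ω, laplaceKernel s t (Y ω) ∂μ := by
  have hK := (continuous_laplaceKernel s t).measurable
  simp only [laplaceKernel_add]
  exact (hXY.comp hK hK).integral_fun_mul_eq_mul_integral (hK.comp hX).aestronglyMeasurable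
    (hK.comp hY).aestronglyMeasurable

lemma integrable_laplaceKernel_comp [IsFiniteMeasure μ] {X : Ω → ℝ × ℝ} (hX : Measurable X)
    (hcone : ∀ᵐ ω ∂μ, 0 ≤ (X ω).2 ∧ (X ω).2 ≤ (X ω).1) {s t : ℝ} (hs : 0 ≤ s)
    (hst : 0 ≤ s + t) : Integrable (fun ω => laplaceKernel s t (X ω)) μ := by
  refine .of_bound ((continuous_laplaceKernel s t).measurable.comp hX).aestronglyMeasurable 1 ?_
  filter_upwards [hcone] with ω ⟨h2, h21⟩
  exact norm_laplaceKernel_le_one (by nlinarith)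

lemma integral_laplaceKernel_lindley [IsProbabilityMeasure μ] {W : Ω → ℝ × ℝ} {A : Ω → ℝ}
    (hW : Measurable W) (hA : Measurable A)
    (hWA : IndepFun W A μ) (hcone : ∀ᵐ ω ∂μ, 0 ≤ (W ω).2 ∧ (W ω).2 ≤ (W ω).1) {lam s t : ℝ}
    (hlam : 0 < lam) (hAlaw : μ.map A = expMeasure lam) (hs : 0 ≤ s) (ht : 0 ≤ t)
    (hsl : s ≠ lam) (hstl : s + t ≠ lam) :
    ∫ ω, laplaceKernel s t (lindley (W ω) (A ω)) ∂μ
      = (1 - lam / (lam - s)) * ∫ ω, laplaceKernel lam 0 (W ω) ∂μ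
        + (lam / (lam - s) - lam / (lam - s - t)) * ∫ ω, laplaceKernel s (lam - s) (W ω) ∂μ
        + lam / (lam - s - t) * ∫ ω, laplaceKernel s t (W ω) ∂μ := by
  have hbound : ∀ q : (ℝ × ℝ) × ℝ, ‖laplaceKernel s t (lindley q.1 q.2)‖ ≤ 1 := fun q =>
    norm_laplaceKernel_le_one
      (add_nonneg (mul_nonneg hs (le_max_right _ _)) (mul_nonneg ht (le_max_right _ _)))
  have hcont : Continuous fun q : (ℝ × ℝ) × ℝ => laplaceKernel s t (lindley q.1 q.2) :=
    (continuous_laplaceKernel s t).comp (by unfold lindley; fun_prop)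
  have hint₁ := (integrable_laplaceKernel_comp hW hcone hlam.le (t := 0) (by linarith)).const_mul
    (1 - lam / (lam - s))
  have hint₂ := (integrable_laplaceKernel_comp hW hcone hs (t := lam - s) (by linarith)).const_mul
    (lam / (lam - s) - lam / (lam - s - t))
  have hint₃ := (integrable_laplaceKernel_comp hW hcone hs (by linarith : 0 ≤ s + t)).const_mul
    (lam / (lam - s - t))
  rw [hWA.integral_comp_eq_integral_integral hW hA
      (.of_bound hcont.aestronglyMeasurable 1 (ae_of_all _ hbound)),
    ← integral_const_mul, ← integral_const_mul, ← integral_const_mul,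
    ← integral_add hint₁ hint₂, ← integral_add (hint₁.fun_add hint₂) hint₃, hAlaw]
  refine integral_congr_ae (hcone.mono fun ω hω => ?_)
  exact integral_laplaceKernel_lindley_expMeasure hlam hsl hstl hω.1 hω.2

end Probability

theorem stmt7_general {Ω : Type*} [MeasurableSpace Ω] (μ : Measure Ω) [IsProbabilityMeasure μ]
    (V1 V2 B1 B2 A : Ω → ℝ)
    (hV1m : Measurable V1) (hV2m : Measurable V2) (hB1m : Measurable B1)
    (hB2m : Measurable B2) (hAm : Measurable A)
    (hV2n : ∀ ω, 0 ≤ V2 ω) (hB2n : ∀ ω, 0 ≤ B2 ω)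
    (hordV : ∀ᵐ ω ∂μ, V2 ω ≤ V1 ω) (hordB : ∀ᵐ ω ∂μ, B2 ω ≤ B1 ω)
    (lam : ℝ) (hlam : 0 < lam)
    (hAexp : ∀ x : ℝ, 0 ≤ x → (μ {ω | x < A ω}).toReal = Real.exp (-lam * x))
    (hindepA : IndepFun (fun ω => (V1 ω, V2 ω, B1 ω, B2 ω)) A μ)
    (hindepB : IndepFun (fun ω => (B1 ω, B2 ω)) (fun ω => (V1 ω, V2 ω)) μ)
    (hstat : Measure.map
        (fun ω => (max (V1 ω + B1 ω - A ω) 0, max (V2 ω + B2 ω - A ω) 0)) μ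
      = Measure.map (fun ω => (V1 ω, V2 ω)) μ)
    (ψ φ : ℝ → ℝ → ℝ)
    (hψ : ∀ s t : ℝ, ψ s t = ∫ ω, Real.exp (-s * V1 ω - t * V2 ω) ∂μ)
    (hφ : ∀ s t : ℝ, φ s t = ∫ ω, Real.exp (-s * B1 ω - t * B2 ω) ∂μ)
    (s t : ℝ) (hs : 0 < s) (ht : 0 < t) (hsl : s ≠ lam) (hstl : s + t ≠ lam) :
    (1 - lam * φ s t / (lam - s - t)) * ψ s t
      = (lam / (lam - s) - lam / (lam - s - t)) * φ s (lam - s) * ψ s (lam - s)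
        + (1 - lam / (lam - s)) * φ lam 0 * ψ lam 0 := by
  have hVm : Measurable fun ω => (V1 ω, V2 ω) := hV1m.prodMk hV2m
  set W : Ω → ℝ × ℝ := fun ω => (V1 ω, V2 ω) + (B1 ω, B2 ω)
  have hWm : Measurable W := hVm.add (hB1m.prodMk hB2m)
  have hcone : ∀ᵐ ω ∂μ, 0 ≤ (W ω).2 ∧ (W ω).2 ≤ (W ω).1 := by
    filter_upwards [hordV, hordB] with ω hV hB
    exact ⟨add_nonneg (hV2n ω) (hB2n ω), add_le_add hV hB⟩
  have hWA : IndepFun W A μ :=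
    hindepA.comp (by fun_prop : Measurable fun q : ℝ × ℝ × ℝ × ℝ => (q.1, q.2.1) + q.2.2)
      measurable_id
  have hfactor : ∀ a b, ∫ ω, laplaceKernel a b (W ω) ∂μ = ψ a b * φ a b := fun a b => by
    rw [hψ, hφ]
    exact hindepB.symm.integral_laplaceKernel_add hVm (hB1m.prodMk hB2m) a b
  have hψ_lindley : ∫ ω, laplaceKernel s t (lindley (W ω) (A ω)) ∂μ = ψ s t := by
    rw [hψ]
    exact ((⟨(by fun_prop), hVm.aemeasurable, hstat⟩ : IdentDistrib _ _ μ μ).comp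
      (continuous_laplaceKernel s t).measurable).integral_eq
  have hstep := integral_laplaceKernel_lindley hWm hAm hWA hcone hlam
    (map_eq_expMeasure_of_tail hAm hlam hAexp) hs.le ht.le hsl hstl
  rw [hψ_lindley, hfactor, hfactor, hfactor] at hstep
  linear_combination hstep

/-- Stationary functional equation (Formula (3) in the paper): if `(V¹,V²)` is a
stationary solution of the two-dimensional Lindley recursion with exponential(λ)
interarrival times and a.s. ordered service times `B¹ ≥ B²`, then its LST `ψ` satisfies
`(1 - λφ(s,t)/(λ-s-t)) ψ(s,t) = (λ/(λ-s) - λ/(λ-s-t)) φ(s,λ-s) ψ(s,λ-s)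
  + (1 - λ/(λ-s)) φ(λ,0) ψ(λ,0)` for `s,t > 0`, `s ≠ λ`, `s+t ≠ λ`. -/
theorem stmt7 {Ω : Type*} [MeasurableSpace Ω] (μ : Measure Ω) [IsProbabilityMeasure μ]
    (V1 V2 B1 B2 A : Ω → ℝ)
    (hV1m : Measurable V1) (hV2m : Measurable V2) (hB1m : Measurable B1)
    (hB2m : Measurable B2) (hAm : Measurable A)
    (hV1n : ∀ ω, 0 ≤ V1 ω) (hV2n : ∀ ω, 0 ≤ V2 ω)
    (hB1n : ∀ ω, 0 ≤ B1 ω) (hB2n : ∀ ω, 0 ≤ B2 ω) (hAn : ∀ ω, 0 ≤ A ω)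
    (hordV : ∀ᵐ ω ∂μ, V2 ω ≤ V1 ω) (hordB : ∀ᵐ ω ∂μ, B2 ω ≤ B1 ω)
    (lam : ℝ) (hlam : 0 < lam)
    (hAexp : ∀ x : ℝ, 0 ≤ x → (μ {ω | x < A ω}).toReal = Real.exp (-lam * x))
    (hindepA : IndepFun (fun ω => (V1 ω, V2 ω, B1 ω, B2 ω)) A μ)
    (hindepB : IndepFun (fun ω => (B1 ω, B2 ω)) (fun ω => (V1 ω, V2 ω)) μ)
    (hstat : Measure.map
        (fun ω => (max (V1 ω + B1 ω - A ω) 0, max (V2 ω + B2 ω - A ω) 0)) μ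
      = Measure.map (fun ω => (V1 ω, V2 ω)) μ)
    (ψ φ : ℝ → ℝ → ℝ)
    (hψ : ∀ s t : ℝ, ψ s t = ∫ ω, Real.exp (-s * V1 ω - t * V2 ω) ∂μ)
    (hφ : ∀ s t : ℝ, φ s t = ∫ ω, Real.exp (-s * B1 ω - t * B2 ω) ∂μ)
    (s t : ℝ) (hs : 0 < s) (ht : 0 < t) (hsl : s ≠ lam) (hstl : s + t ≠ lam) :
    (1 - lam * φ s t / (lam - s - t)) * ψ s t
      = (lam / (lam - s) - lam / (lam - s - t)) * φ s (lam - s) * ψ s (lam - s)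
        + (1 - lam / (lam - s)) * φ lam 0 * ψ lam 0 :=
  stmt7_general μ V1 V2 B1 B2 A hV1m hV2m hB1m hB2m hAm hV2n hB2n hordV hordB lam hlam hAexp hindepA
    hindepB hstat ψ φ hψ hφ s t hs ht hsl hstl
end

section
/- K-dimensional Rouché root: let (B⁽¹⁾,...,B⁽ᴷ⁾) be nonnegative random variables with P(B⁽¹⁾ ≥ B⁽²⁾ ≥ ... ≥ B⁽ᴷ⁾) = 1 and P(B⁽ʲ⁻¹⁾ > B⁽ʲ⁾) > 0, let φ be their joint LST and λ > 0. Then for each j with 2 ≤ j ≤ K and all s₁,...,s_{j-1} with positive real parts, there is a unique S_j = S_j(s₁,...,s_{j-1}) with Re(s₁+...+s_{j-1}+S_j) > 0 satisfying λφ(s₁,...,s_{j-1},S_j,0,...,0) = λ - (s₁+...+s_{j-1}+S_j). -/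
/-!
Write `b = B⁽ʲ⁾`, `h = ∑_{i<j} sᵢ (B⁽ʲ⁾ - B⁽ⁱ⁾)` and `ψ(z) = E[exp (h - z b)]`. With
`z = s₁ + ⋯ + s_{j-1} + S_j` the equation becomes the fixed-point problem `z = λ - λ ψ(z)`, and the
ordering of the claims gives `re h ≤ 0` a.s. and `re h < 0` with positive probability.

On the line `re z = δ ≥ 0`, `|ψ|` is bounded by `c(δ) = E[exp (re h - δ b)]`, a decreasing convex
function with `c(0) < 1`, and `z ↦ λ - λ ψ(z)` is Lipschitz on `δ ≤ re z` with constant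
`λ (-c'(δ))`. Convexity gives `t (-c'(t)) ≤ c(0) - c(t)`, so this constant is `< 1` as soon as
`λ (1 - c(t)) ≤ t`. Every root `z` satisfies this with `t = re z`, which gives uniqueness. For
existence, the intermediate value theorem gives `δ > 0` with `λ (1 - c(δ)) = δ`, and Banach's
fixed-point theorem applies on the half-plane `δ ≤ re z`, which the map preserves.
-/

open MeasureTheory

lemma norm_cexp_sub_cexp_le {a : ℝ} {w₁ w₂ : ℂ} (h₁ : w₁.re ≤ a) (h₂ : w₂.re ≤ a) :
    ‖Complex.exp w₁ - Complex.exp w₂‖ ≤ Real.exp a * ‖w₁ - w₂‖ :=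
  (convex_halfSpace_le Complex.reLm.isLinear a).norm_image_sub_le_of_norm_deriv_le
    (fun _ _ => Complex.differentiableAt_exp)
    (fun w hw => by rw [Complex.deriv_exp, Complex.norm_exp]; exact Real.exp_le_exp.2 hw) h₂ h₁

lemma norm_cexp_sub_mul_ofReal (w z : ℂ) (x : ℝ) :
    ‖Complex.exp (w - z * x)‖ = Real.exp (w.re - z.re * x) := by
  simp [Complex.norm_exp]

lemma norm_exp_sub_mul_le_one {r δ x : ℝ} (hr : r ≤ 0) (hδ : 0 ≤ δ) (hx : 0 ≤ x) :
    ‖Real.exp (r - δ * x)‖ ≤ 1 := by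
  rw [Real.norm_of_nonneg (Real.exp_pos _).le, Real.exp_le_one_iff]
  nlinarith

lemma mul_mul_exp_sub_le (r t x : ℝ) :
    t * x * Real.exp (r - t * x) ≤ Real.exp r - Real.exp (r - t * x) := by
  have h₁ := Real.add_one_le_exp (t * x)
  have h₂ : Real.exp r = Real.exp (r - t * x) * Real.exp (t * x) := by
    rw [← Real.exp_add, sub_add_cancel]
  rw [h₂]
  nlinarith [Real.exp_pos (r - t * x)]

section TiltedLST

variable {Ω : Type*} [MeasurableSpace Ω] (μ : Measure Ω) (h : Ω → ℂ) (b : Ω → ℝ)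

-- `ψ`, `c` and `-c'` of the sketch above.
noncomputable def tiltedLST (z : ℂ) : ℂ := ∫ ω, Complex.exp (h ω - z * b ω) ∂μ

noncomputable def tiltedLSTBound (δ : ℝ) : ℝ := ∫ ω, Real.exp ((h ω).re - δ * b ω) ∂μ

noncomputable def tiltedLSTSlope (δ : ℝ) : ℝ := ∫ ω, b ω * Real.exp ((h ω).re - δ * b ω) ∂μ

variable {μ h b}

lemma norm_tiltedLST_le (z : ℂ) : ‖tiltedLST μ h b z‖ ≤ tiltedLSTBound μ h b z.re :=
  (norm_integral_le_integral_norm _).trans_eq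
    (integral_congr_ae (.of_forall fun _ => norm_cexp_sub_mul_ofReal _ _ _))

lemma tiltedLSTBound_nonneg (δ : ℝ) : 0 ≤ tiltedLSTBound μ h b δ :=
  integral_nonneg fun _ => (Real.exp_pos _).le

lemma tiltedLSTSlope_nonneg (hb : ∀ ω, 0 ≤ b ω) (δ : ℝ) : 0 ≤ tiltedLSTSlope μ h b δ :=
  integral_nonneg fun ω => mul_nonneg (hb ω) (Real.exp_pos _).le

lemma mul_one_sub_tiltedLSTBound_le_re {lam : ℝ} (hlam : 0 ≤ lam) (z : ℂ) :
    lam * (1 - tiltedLSTBound μ h b z.re) ≤ ((lam : ℂ) - lam * tiltedLST μ h b z).re := by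
  have hre := (Complex.re_le_norm _).trans (norm_tiltedLST_le (μ := μ) (h := h) (b := b) z)
  simp only [Complex.sub_re, Complex.ofReal_re, Complex.re_ofReal_mul]
  nlinarith

variable [IsFiniteMeasure μ] (hbm : Measurable b) (hhm : Measurable h) (hb : ∀ ω, 0 ≤ b ω)
  (hh : ∀ᵐ ω ∂μ, (h ω).re ≤ 0)

include hbm hhm hb hh

lemma integrable_exp_re_sub_mul {δ : ℝ} (hδ : 0 ≤ δ) :
    Integrable (fun ω => Real.exp ((h ω).re - δ * b ω)) μ :=
  (integrable_const 1).mono' (by fun_prop : Measurable _).aestronglyMeasurable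
    (by filter_upwards [hh] with ω hω using norm_exp_sub_mul_le_one hω hδ (hb ω))

lemma integrable_cexp_sub_mul {z : ℂ} (hz : 0 ≤ z.re) :
    Integrable (fun ω => Complex.exp (h ω - z * b ω)) μ :=
  (integrable_exp_re_sub_mul hbm hhm hb hh hz).mono'
    (by fun_prop : Measurable _).aestronglyMeasurable
    (.of_forall fun _ => (norm_cexp_sub_mul_ofReal _ _ _).le)

lemma integrable_mul_exp_re_sub_mul {δ : ℝ} (hδ : 0 < δ) :
    Integrable (fun ω => b ω * Real.exp ((h ω).re - δ * b ω)) μ := by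
  refine (((integrable_exp_re_sub_mul hbm hhm hb hh le_rfl).sub
    (integrable_exp_re_sub_mul hbm hhm hb hh hδ.le)).const_mul δ⁻¹).mono'
    (by fun_prop : Measurable _).aestronglyMeasurable (.of_forall fun ω => ?_)
  rw [Real.norm_of_nonneg (mul_nonneg (hb ω) (Real.exp_pos _).le), le_inv_mul_iff₀ hδ, ← mul_assoc]
  simpa using mul_mul_exp_sub_le (h ω).re δ (b ω)

lemma tiltedLSTBound_antitoneOn : AntitoneOn (tiltedLSTBound μ h b) (Set.Ici 0) :=
  fun δ₁ h₁ δ₂ h₂ h₁₂ => integral_mono (integrable_exp_re_sub_mul hbm hhm hb hh h₂)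
    (integrable_exp_re_sub_mul hbm hhm hb hh h₁)
    fun ω => Real.exp_le_exp.2 (by nlinarith [hb ω])

lemma continuousOn_tiltedLSTBound : ContinuousOn (tiltedLSTBound μ h b) (Set.Ici 0) :=
  continuousOn_of_dominated (fun _ _ => (by fun_prop : Measurable _).aestronglyMeasurable)
    (fun _ hδ => by filter_upwards [hh] with ω hω using norm_exp_sub_mul_le_one hω hδ (hb ω))
    (integrable_const 1) (.of_forall fun _ => by fun_prop)

lemma mul_tiltedLSTSlope_le {t : ℝ} (ht : 0 < t) :
    t * tiltedLSTSlope μ h b t ≤ tiltedLSTBound μ h b 0 - tiltedLSTBound μ h b t := by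
  rw [tiltedLSTSlope, tiltedLSTBound, tiltedLSTBound, ← integral_const_mul,
    ← integral_sub (integrable_exp_re_sub_mul hbm hhm hb hh le_rfl)
      (integrable_exp_re_sub_mul hbm hhm hb hh ht.le)]
  refine integral_mono ((integrable_mul_exp_re_sub_mul hbm hhm hb hh ht).const_mul t)
    ((integrable_exp_re_sub_mul hbm hhm hb hh le_rfl).sub
      (integrable_exp_re_sub_mul hbm hhm hb hh ht.le)) fun ω => ?_
  simpa [mul_assoc] using mul_mul_exp_sub_le (h ω).re t (b ω)

lemma norm_tiltedLST_sub_le {t : ℝ} (ht : 0 < t) {z₁ z₂ : ℂ} (h₁ : t ≤ z₁.re) (h₂ : t ≤ z₂.re) :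
    ‖tiltedLST μ h b z₁ - tiltedLST μ h b z₂‖ ≤ tiltedLSTSlope μ h b t * ‖z₁ - z₂‖ := by
  rw [tiltedLST, tiltedLST, ← integral_sub (integrable_cexp_sub_mul hbm hhm hb hh (ht.le.trans h₁))
    (integrable_cexp_sub_mul hbm hhm hb hh (ht.le.trans h₂)), tiltedLSTSlope, ← integral_mul_const]
  refine (norm_integral_le_integral_norm _).trans (integral_mono_of_nonneg
    (.of_forall fun _ => norm_nonneg _)
    ((integrable_mul_exp_re_sub_mul hbm hhm hb hh ht).mul_const _) (.of_forall fun ω => ?_))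
  have hre : ∀ z : ℂ, t ≤ z.re → (h ω - z * b ω).re ≤ (h ω).re - t * b ω := fun z hz => by
    simp only [Complex.sub_re, Complex.re_mul_ofReal]
    nlinarith [hb ω]
  calc ‖Complex.exp (h ω - z₁ * b ω) - Complex.exp (h ω - z₂ * b ω)‖
      ≤ Real.exp ((h ω).re - t * b ω) * ‖(h ω - z₁ * b ω) - (h ω - z₂ * b ω)‖ :=
        norm_cexp_sub_cexp_le (hre z₁ h₁) (hre z₂ h₂)
    _ = b ω * Real.exp ((h ω).re - t * b ω) * ‖z₁ - z₂‖ := by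
        rw [show (h ω - z₁ * b ω) - (h ω - z₂ * b ω) = (z₂ - z₁) * b ω by ring, norm_mul,
          Complex.norm_real, Real.norm_of_nonneg (hb ω), norm_sub_rev]
        ring

lemma norm_sub_mul_tiltedLST_sub_le {lam : ℝ} (hlam : 0 ≤ lam) {t : ℝ} (ht : 0 < t) {z₁ z₂ : ℂ}
    (h₁ : t ≤ z₁.re) (h₂ : t ≤ z₂.re) :
    ‖((lam : ℂ) - lam * tiltedLST μ h b z₁) - (lam - lam * tiltedLST μ h b z₂)‖ ≤
      lam * tiltedLSTSlope μ h b t * ‖z₁ - z₂‖ := by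
  rw [sub_sub_sub_cancel_left, ← mul_sub, norm_mul, Complex.norm_real, Real.norm_of_nonneg hlam,
    norm_sub_rev, mul_assoc]
  gcongr
  exact norm_tiltedLST_sub_le hbm hhm hb hh ht h₁ h₂

end TiltedLST

section RoucheRoot

variable {Ω : Type*} [MeasurableSpace Ω] {μ : Measure Ω} [IsProbabilityMeasure μ]
  {h : Ω → ℂ} {b : Ω → ℝ} (hbm : Measurable b) (hhm : Measurable h) (hb : ∀ ω, 0 ≤ b ω)
  (hh : ∀ᵐ ω ∂μ, (h ω).re ≤ 0) (hneg : 0 < μ {ω | (h ω).re < 0})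

include hbm hhm hb hh hneg

lemma tiltedLSTBound_zero_lt_one : tiltedLSTBound μ h b 0 < 1 := by
  have hint := integrable_exp_re_sub_mul hbm hhm hb hh le_rfl
  have hpos : 0 < ∫ ω, (1 - Real.exp ((h ω).re - 0 * b ω)) ∂μ := by
    rw [integral_pos_iff_support_of_nonneg_ae _
      (show Integrable (fun ω => 1 - Real.exp ((h ω).re - 0 * b ω)) μ from
        (integrable_const 1).sub hint)]
    · refine hneg.trans_le (measure_mono fun ω (hω : (h ω).re < 0) => ?_)
      simpa [sub_eq_zero] using (Real.exp_lt_one_iff.2 hω).ne'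
    · filter_upwards [hh] with ω hω
      simpa using hω
  rw [integral_sub (integrable_const 1) hint, integral_const, probReal_univ, one_smul] at hpos
  exact sub_pos.1 hpos

variable {lam : ℝ} (hlam : 0 < lam)
include hlam

lemma mul_tiltedLSTSlope_lt_one {t : ℝ} (ht : 0 < t)
    (hfix : lam * (1 - tiltedLSTBound μ h b t) ≤ t) : lam * tiltedLSTSlope μ h b t < 1 := by
  have hslope := mul_tiltedLSTSlope_le hbm hhm hb hh ht
  have hc₀ := tiltedLSTBound_zero_lt_one hbm hhm hb hh hneg
  have : t * (lam * tiltedLSTSlope μ h b t) < t * 1 := by nlinarith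
  exact lt_of_mul_lt_mul_left this ht.le

lemma tiltedLST_root_eq_of_re_le {z₁ z₂ : ℂ} (hz₁ : 0 < z₁.re)
    (h₁ : lam * tiltedLST μ h b z₁ = lam - z₁) (h₂ : lam * tiltedLST μ h b z₂ = lam - z₂)
    (hle : z₁.re ≤ z₂.re) : z₁ = z₂ := by
  have hfix : lam * (1 - tiltedLSTBound μ h b z₁.re) ≤ z₁.re := by
    simpa [h₁] using mul_one_sub_tiltedLSTBound_le_re (μ := μ) (h := h) (b := b) hlam.le z₁
  have hL := mul_tiltedLSTSlope_lt_one hbm hhm hb hh hneg hlam hz₁ hfix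
  have hlip := norm_sub_mul_tiltedLST_sub_le hbm hhm hb hh hlam.le hz₁ le_rfl hle
  rw [h₁, h₂, sub_sub_cancel, sub_sub_cancel] at hlip
  have hzero : ‖z₁ - z₂‖ = 0 := by nlinarith [norm_nonneg (z₁ - z₂)]
  exact sub_eq_zero.1 (norm_eq_zero.1 hzero)

lemma exists_pos_fixedPoint_tiltedLSTBound :
    ∃ δ, 0 < δ ∧ lam * (1 - tiltedLSTBound μ h b δ) = δ := by
  set ε := lam * (1 - tiltedLSTBound μ h b 0)
  have hε : 0 < ε := mul_pos hlam (sub_pos.2 (tiltedLSTBound_zero_lt_one hbm hhm hb hh hneg))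
  have hεlam : ε ≤ lam := by nlinarith [tiltedLSTBound_nonneg (μ := μ) (h := h) (b := b) 0]
  have hcont : ContinuousOn (fun δ => lam * (1 - tiltedLSTBound μ h b δ) - δ) (Set.Icc ε lam) :=
    ((continuousOn_const.mul (continuousOn_const.sub
      (continuousOn_tiltedLSTBound hbm hhm hb hh))).sub continuousOn_id).mono
      (Set.Icc_subset_Ici_self.trans (Set.Ici_subset_Ici.2 hε.le))
  have hcε := tiltedLSTBound_antitoneOn hbm hhm hb hh Set.self_mem_Ici (Set.mem_Ici.2 hε.le) hε.le
  obtain ⟨δ, hδ, hδfix⟩ := intermediate_value_Icc' hεlam hcont (show (0 : ℝ) ∈ Set.Icc _ _ from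
    ⟨by nlinarith [tiltedLSTBound_nonneg (μ := μ) (h := h) (b := b) lam], by nlinarith⟩)
  exact ⟨δ, hε.trans_le hδ.1, sub_eq_zero.1 hδfix⟩

lemma exists_tiltedLST_root : ∃ z : ℂ, 0 < z.re ∧ lam * tiltedLST μ h b z = lam - z := by
  obtain ⟨δ, hδ, hfix⟩ := exists_pos_fixedPoint_tiltedLSTBound hbm hhm hb hh hneg hlam
  set F : ℂ → ℂ := fun z => lam - lam * tiltedLST μ h b z
  set H := {z : ℂ | δ ≤ z.re}
  have hmaps : Set.MapsTo F H H := fun z (hz : δ ≤ z.re) => by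
    have hc := tiltedLSTBound_antitoneOn hbm hhm hb hh hδ.le (hδ.le.trans hz) hz
    exact hfix.symm.le.trans ((by gcongr : lam * (1 - tiltedLSTBound μ h b δ) ≤
      lam * (1 - tiltedLSTBound μ h b z.re)).trans (mul_one_sub_tiltedLSTBound_le_re hlam.le z))
  have hL := mul_tiltedLSTSlope_lt_one hbm hhm hb hh hneg hlam hδ hfix.le
  have hlip : LipschitzOnWith (Real.toNNReal (lam * tiltedLSTSlope μ h b δ)) F H := by
    refine LipschitzOnWith.of_dist_le_mul fun z₁ (h₁ : δ ≤ z₁.re) z₂ (h₂ : δ ≤ z₂.re) => ?_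
    rw [dist_eq_norm, dist_eq_norm,
      Real.coe_toNNReal _ (mul_nonneg hlam.le (tiltedLSTSlope_nonneg hb δ))]
    exact norm_sub_mul_tiltedLST_sub_le hbm hhm hb hh hlam.le hδ h₁ h₂
  obtain ⟨z, hz, hFz, -⟩ := ContractingWith.exists_fixedPoint'
    (isClosed_le continuous_const Complex.continuous_re).isComplete hmaps
    ⟨by simpa using hL, hlip.mapsToRestrict hmaps⟩ (x := (δ : ℂ)) (by simp)
    (edist_ne_top _ _)
  have hFz' : (lam : ℂ) - lam * tiltedLST μ h b z = z := hFz
  exact ⟨z, hδ.trans_le hz, by linear_combination -hFz'⟩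

theorem existsUnique_tiltedLST_root :
    ∃! z : ℂ, 0 < z.re ∧ lam * tiltedLST μ h b z = lam - z := by
  obtain ⟨z, hz, hroot⟩ := exists_tiltedLST_root hbm hhm hb hh hneg hlam
  refine ⟨z, ⟨hz, hroot⟩, fun w ⟨hw, hwroot⟩ => ?_⟩
  rcases le_total w.re z.re with hle | hle
  · exact tiltedLST_root_eq_of_re_le hbm hhm hb hh hneg hlam hw hwroot hroot hle
  · exact (tiltedLST_root_eq_of_re_le hbm hhm hb hh hneg hlam hz hroot hwroot hle).symm

end RoucheRoot

theorem existsUnique_rouche_root {Ω ι : Type*} [MeasurableSpace Ω] {μ : Measure Ω}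
    [IsProbabilityMeasure μ] (T : Finset ι) (s : ι → ℂ) (B : ι → Ω → ℝ) (b : Ω → ℝ)
    (hBm : ∀ i ∈ T, Measurable (B i)) (hbm : Measurable b) (hb : ∀ ω, 0 ≤ b ω)
    (hs : ∀ i ∈ T, 0 < (s i).re) (hord : ∀ᵐ ω ∂μ, ∀ i ∈ T, b ω ≤ B i ω)
    (hstrict : ∃ i ∈ T, 0 < μ {ω | b ω < B i ω}) {lam : ℝ} (hlam : 0 < lam) :
    ∃! S : ℂ, 0 < ((∑ i ∈ T, s i) + S).re ∧
      lam * ∫ ω, Complex.exp (-(∑ i ∈ T, s i * B i ω + S * b ω)) ∂μ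
        = lam - ((∑ i ∈ T, s i) + S) := by
  set h : Ω → ℂ := fun ω => ∑ i ∈ T, s i * ((b ω - B i ω : ℝ) : ℂ)
  have hhm : Measurable h := Finset.measurable_sum _ fun i hi => by
    have := hBm i hi
    fun_prop
  have hre : ∀ ω, (h ω).re = ∑ i ∈ T, (s i).re * (b ω - B i ω) := fun ω => by
    simp only [h, Complex.re_sum, Complex.re_mul_ofReal]
  have hterm : ∀ ω, (∀ i ∈ T, b ω ≤ B i ω) → ∀ i ∈ T, (s i).re * (b ω - B i ω) ≤ 0 :=
    fun ω hω i hi => mul_nonpos_of_nonneg_of_nonpos (hs i hi).le (sub_nonpos.2 (hω i hi))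
  have hh : ∀ᵐ ω ∂μ, (h ω).re ≤ 0 := by
    filter_upwards [hord] with ω hω
    rw [hre]
    exact Finset.sum_nonpos (hterm ω hω)
  have hneg : 0 < μ {ω | (h ω).re < 0} := by
    obtain ⟨i₀, hi₀, hpos⟩ := hstrict
    refine hpos.trans_le (measure_mono_ae ?_)
    filter_upwards [hord] with ω hω (hlt : b ω < B i₀ ω)
    show (h ω).re < 0
    rw [hre, ← Finset.sum_const_zero (s := T)]
    exact Finset.sum_lt_sum (hterm ω hω)
      ⟨i₀, hi₀, mul_neg_of_pos_of_neg (hs i₀ hi₀) (sub_neg.2 hlt)⟩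
  have hexp : ∀ S ω, -(∑ i ∈ T, s i * B i ω + S * b ω) = h ω - ((∑ i ∈ T, s i) + S) * b ω :=
    fun S ω => by
      simp only [h, Complex.ofReal_sub, mul_sub, Finset.sum_sub_distrib, add_mul, Finset.sum_mul]
      ring
  simp_rw [hexp]
  exact (Equiv.addLeft (∑ i ∈ T, s i)).existsUnique_congr_right.2
    (existsUnique_tiltedLST_root hbm hhm hb hh hneg hlam)

/-- K-dimensional Rouché root: for a.s. ordered nonnegative claims
`B⁽¹⁾ ≥ ... ≥ B⁽ᴷ⁾` with `P(B⁽ʲ⁻¹⁾ > B⁽ʲ⁾) > 0`, joint LST `φ` and `λ > 0`: for each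
`2 ≤ j ≤ K` and all `s₁,...,s_{j-1}` with positive real parts, there is a unique `S_j`
with `Re(s₁+...+s_{j-1}+S_j) > 0` such that
`λ φ(s₁,...,s_{j-1},S_j,0,...,0) = λ - (s₁+...+s_{j-1}+S_j)`.
(Book `i` is represented by the index `i-1 : Fin K`.) -/
theorem stmt14 {Ω : Type*} [MeasurableSpace Ω] (μ : Measure Ω) [IsProbabilityMeasure μ]
    (K : ℕ) (B : Fin K → Ω → ℝ)
    (hBm : ∀ i, Measurable (B i)) (hBn : ∀ i ω, 0 ≤ B i ω)
    (hord : ∀ᵐ ω ∂μ, ∀ i j : Fin K, i ≤ j → B j ω ≤ B i ω)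
    (lam : ℝ) (hlam : 0 < lam)
    (φ : (Fin K → ℂ) → ℂ)
    (hφ : ∀ sv : Fin K → ℂ, φ sv = ∫ ω, Complex.exp (-∑ i, sv i * B i ω) ∂μ)
    (j : ℕ) (hj2 : 2 ≤ j) (hjK : j ≤ K)
    (hstrict : 0 < μ {ω | B ⟨j - 1, by omega⟩ ω < B ⟨j - 2, by omega⟩ ω})
    (s : ℕ → ℂ) (hs : ∀ i < j - 1, 0 < (s i).re) :
    ∃! S : ℂ,
      0 < ((∑ i ∈ Finset.range (j - 1), s i) + S).re ∧
      (lam : ℂ) * φ (fun i => if (i : ℕ) < j - 1 then s i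
                              else if (i : ℕ) = j - 1 then S else 0)
        = (lam : ℂ) - ((∑ i ∈ Finset.range (j - 1), s i) + S) := by
  set T : Finset (Fin K) := Finset.univ.filter fun i => (i : ℕ) < j - 1
  set jm1 : Fin K := ⟨j - 1, by omega⟩
  have hsumT : ∑ i ∈ T, s i = ∑ i ∈ Finset.range (j - 1), s i := by
    have hT : T.map Fin.valEmbedding = Finset.range (j - 1) := by
      ext n
      simp only [T, Finset.mem_map, Finset.mem_filter, Finset.mem_univ, true_and,
        Fin.valEmbedding_apply, Finset.mem_range]
      exact ⟨fun ⟨i, hi, hin⟩ => hin ▸ hi, fun hn => ⟨⟨n, by omega⟩, hn, rfl⟩⟩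
    rw [← hT, Finset.sum_map]
    rfl
  have hsplit : ∀ S ω, ∑ i : Fin K,
      (if (i : ℕ) < j - 1 then s i else if (i : ℕ) = j - 1 then S else 0) * (B i ω : ℂ) =
        ∑ i ∈ T, s i * (B i ω : ℂ) + S * B jm1 ω := fun S ω => by
    rw [Finset.sum_filter, ← Fintype.sum_ite_eq' jm1 (fun i => S * (B i ω : ℂ)),
      ← Finset.sum_add_distrib]
    refine Finset.sum_congr rfl fun i _ => ?_
    simp only [jm1, Fin.ext_iff]
    split_ifs <;> first | omega | ring
  have hordT : ∀ᵐ ω ∂μ, ∀ i ∈ T, B jm1 ω ≤ B i ω := by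
    filter_upwards [hord] with ω hω i hi
    exact hω i jm1 (Fin.le_def.2 (Finset.mem_filter.1 hi).2.le)
  have hroot := existsUnique_rouche_root (μ := μ) T (fun i => s i) B (B jm1) (fun i _ => hBm i)
    (hBm jm1) (hBn jm1) (fun i hi => hs i (Finset.mem_filter.1 hi).2) hordT
    ⟨⟨j - 2, by omega⟩, Finset.mem_filter.2 ⟨Finset.mem_univ _, show j - 2 < j - 1 by omega⟩,
      hstrict⟩ hlam
  simpa only [hφ, hsplit, hsumT] using hroot
end

section
/- Work conservation lemma: in the three-queue model with a.s. ordered service times B⁽¹⁾ ≥ B⁽²⁾ ≥ B⁽³⁾, let U₃*(s₁,s₂) satisfy the fixed-point equation U₃*(s₁,s₂) = φ(s₁,s₂,λ(1-U₃*(s₁,s₂))-s₁-s₂), let Ũ₂*(s₁) satisfy U₃*(s₁, λ(1-Ũ₂*(s₁))-s₁) = Ũ₂*(s₁), and let U₂*(s₁) satisfy φ(s₁, λ(1-U₂*(s₁))-s₁, 0) = U₂*(s₁), where in each case the solution with Re(λ(1-·)) > 0 is unique. Then Ũ₂*(s₁) = U₂*(s₁) for all s₁ with Re(s₁) > 0.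 -/
/-- Work conservation (Lemma 2 in the paper): in the three-queue model with a.s. ordered
service times, if `U₃*` satisfies `U₃*(s₁,s₂) = φ(s₁,s₂,λ(1-U₃*(s₁,s₂))-s₁-s₂)`,
`Ũ₂*` satisfies `U₃*(s₁, λ(1-Ũ₂*(s₁))-s₁) = Ũ₂*(s₁)`, and `U₂*` satisfies
`φ(s₁, λ(1-U₂*(s₁))-s₁, 0) = U₂*(s₁)`, with uniqueness of fixed points in the region
`Re(λ(1-·)) > 0`, then `Ũ₂*(s₁) = U₂*(s₁)` for all `s₁` with `Re s₁ > 0`. -/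
theorem stmt16 (lam : ℝ) (hlam : 0 < lam) (φ : ℂ → ℂ → ℂ → ℂ)
    (U3 : ℂ → ℂ → ℂ) (Ut2 U2 : ℂ → ℂ)
    (hU3 : ∀ s1 s2 : ℂ, 0 < s1.re → 0 < (s1 + s2).re →
      U3 s1 s2 = φ s1 s2 ((lam : ℂ) * (1 - U3 s1 s2) - s1 - s2))
    (hUt2 : ∀ s1 : ℂ, 0 < s1.re →
      U3 s1 ((lam : ℂ) * (1 - Ut2 s1) - s1) = Ut2 s1
        ∧ 0 < ((lam : ℂ) * (1 - Ut2 s1)).re)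
    (hU2 : ∀ s1 : ℂ, 0 < s1.re →
      φ s1 ((lam : ℂ) * (1 - U2 s1) - s1) 0 = U2 s1
        ∧ 0 < ((lam : ℂ) * (1 - U2 s1)).re)
    (huniq : ∀ s1 : ℂ, 0 < s1.re → ∀ x y : ℂ,
      (φ s1 ((lam : ℂ) * (1 - x) - s1) 0 = x ∧ 0 < ((lam : ℂ) * (1 - x)).re) →
      (φ s1 ((lam : ℂ) * (1 - y) - s1) 0 = y ∧ 0 < ((lam : ℂ) * (1 - y)).re) → x = y) :
    ∀ s1 : ℂ, 0 < s1.re → Ut2 s1 = U2 s1 := by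
  intro s1 hs1
  obtain ⟨ht, hre⟩ := hUt2 s1 hs1
  set s2 : ℂ := (lam : ℂ) * (1 - Ut2 s1) - s1 with hs2
  have hsum : 0 < (s1 + s2).re := by
    have : s1 + s2 = (lam : ℂ) * (1 - Ut2 s1) := by ring
    rw [this]; exact hre
  have h3 := hU3 s1 s2 hs1 hsum
  rw [ht] at h3
  have hz : (lam : ℂ) * (1 - Ut2 s1) - s1 - s2 = 0 := by rw [hs2]; ring
  rw [hz] at h3
  exact huniq s1 hs1 _ _ ⟨h3.symm, hre⟩ (hU2 s1 hs1)
end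

section
/- Correspondence with the independent tandem fluid queue: let λ = λ₁ + λ₂ and φ(s,t) = (λ₁/(λ₁+λ₂))B₁*(s+t) + (λ₂/(λ₁+λ₂))B₂*(s), where B₁*, B₂* are LSTs of nonnegative random variables B₁, B₂. Then: (i) λ(1-φ(s,t)) = λ₁(1-B₁*(s+t)) + λ₂(1-B₂*(s)); (ii) if t(s) is the Rouché root of λφ(s,t) = λ-(s+t), then η̂(s) := s+t(s) satisfies λ₁B₁*(η̂(s)) + λ₂B₂*(s) = λ₁+λ₂-η̂(s); (iii) the workload transform ψ(s,t) = (1-ρ₁)·s/(s+t-λ(1-φ(s,t)))·(t(s)-t)/t(s) equals (1-λ₁E[B₁]-λ₂E[B₂])·s/(s+t-λ₁(1-B₁*(s+t))-λ₂(1-B₂*(s)))·(s+t-η̂(s))/(s-η̂(s)), which is Kella's formula ψ_W(s+t,s) for the tandem fluid queue. -/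
open MeasureTheory

/-- Correspondence with Kella's independent tandem fluid queue: with `λ = λ₁+λ₂` and
`φ(s,t) = (λ₁/λ)B₁*(s+t) + (λ₂/λ)B₂*(s)`,
(i) `λ(1-φ(s,t)) = λ₁(1-B₁*(s+t)) + λ₂(1-B₂*(s))`;
(ii) `η̂(s) := s+t(s)` satisfies `λ₁B₁*(η̂(s)) + λ₂B₂*(s) = λ₁+λ₂-η̂(s)`;
(iii) the workload transform `(1-ρ₁)·s/(s+t-λ(1-φ(s,t)))·(t(s)-t)/t(s)` equals Kella's
formula `ψ_W(s+t,s)`. -/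
theorem stmt18 {Ω : Type*} [MeasurableSpace Ω] (μ : Measure Ω) [IsProbabilityMeasure μ]
    (lam1 lam2 : ℝ) (h1 : 0 < lam1) (h2 : 0 < lam2)
    (B1 B2 : Ω → ℝ) (hB1m : Measurable B1) (hB2m : Measurable B2)
    (hB1n : ∀ ω, 0 ≤ B1 ω) (hB2n : ∀ ω, 0 ≤ B2 ω)
    (hB1i : Integrable B1 μ) (hB2i : Integrable B2 μ)
    (B1star B2star : ℝ → ℝ)
    (hB1star : ∀ x : ℝ, B1star x = ∫ ω, Real.exp (-x * B1 ω) ∂μ)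
    (hB2star : ∀ x : ℝ, B2star x = ∫ ω, Real.exp (-x * B2 ω) ∂μ)
    (lam : ℝ) (hlam : lam = lam1 + lam2)
    (φ : ℝ → ℝ → ℝ)
    (hφ : ∀ s t : ℝ, φ s t
      = lam1 / (lam1 + lam2) * B1star (s + t) + lam2 / (lam1 + lam2) * B2star s)
    (rho1 : ℝ)
    (hrho1 : rho1 = lam1 * ∫ ω, B1 ω ∂μ + lam2 * ∫ ω, B2 ω ∂μ) (hrho1lt : rho1 < 1)
    (ts : ℝ → ℝ)
    (hroot : ∀ s : ℝ, 0 < s → lam * φ s (ts s) = lam - (s + ts s)) :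
    (∀ s t : ℝ, lam * (1 - φ s t)
        = lam1 * (1 - B1star (s + t)) + lam2 * (1 - B2star s)) ∧
    (∀ s : ℝ, 0 < s →
      lam1 * B1star (s + ts s) + lam2 * B2star s = lam1 + lam2 - (s + ts s)) ∧
    (∀ s t : ℝ, 0 < s → 0 < t →
      (1 - rho1) * (s / (s + t - lam * (1 - φ s t))) * ((ts s - t) / ts s)
        = (1 - lam1 * ∫ ω, B1 ω ∂μ - lam2 * ∫ ω, B2 ω ∂μ) * s
            / (s + t - lam1 * (1 - B1star (s + t)) - lam2 * (1 - B2star s))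
            * ((s + t - (s + ts s)) / (s - (s + ts s)))) := by
  have hlpos : (0:ℝ) < lam1 + lam2 := by linarith
  have hi : ∀ s t : ℝ, lam * (1 - φ s t)
      = lam1 * (1 - B1star (s + t)) + lam2 * (1 - B2star s) := by
    intro s t
    rw [hφ, hlam]
    field_simp
    ring
  refine ⟨hi, ?_, ?_⟩
  · intro s hs
    have h := hroot s hs
    have := hi s (ts s)
    nlinarith [this, h]
  · intro s t hs ht
    rw [hi s t, hrho1]
    have h3 : (s + t - (s + ts s)) / (s - (s + ts s)) = (ts s - t) / ts s := by
      have : s + t - (s + ts s) = -(ts s - t) := by ring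
      have h2 : s - (s + ts s) = -(ts s) := by ring
      rw [this, h2, neg_div_neg_eq]
    rw [h3]
    ring
end

section
/- Proportional claims as a special case: suppose B⁽¹⁾ = σ/p₂ and B⁽²⁾ = σ/p₁ with p₁ > p₂ > 0 and σ a nonnegative random variable with LST σ*(α) = E[e^{-ασ}] (so B⁽¹⁾ ≥ B⁽²⁾). Then the joint LST is φ(s,t) = σ*(s/p₂ + t/p₁), and the Rouché equation λφ(t,s) = λ-(s+t) for the root s(t) (with arguments interchanged) is equivalent, under the substitution α = p+q, s = p₁p, t = p₂q, to the equation p₁α - λ(1 - σ*(α)) = q(p₁-p₂) defining q⁺(q(p₁-p₂)) in the Avram–Palmowski–Pistorius model; the relation between the roots is s(t) = p₁(q⁺(q(p₁-p₂)) - q). -/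
open MeasureTheory

/-- Proportional claims as a special case (Section 4 of the paper): with `B⁽¹⁾ = σ/p₂`,
`B⁽²⁾ = σ/p₁`, `p₁ > p₂ > 0`, the joint LST is `φ(s,t) = σ*(s/p₂ + t/p₁)`; the Rouché
equation `λφ(t,s) = λ-(s+t)` (arguments interchanged), under the substitution `α = p+q`,
`s = p₁p`, `t = p₂q`, is equivalent to `p₁α - λ(1-σ*(α)) = q(p₁-p₂)` (the equation for
`q⁺(q(p₁-p₂))` in the Avram–Palmowski–Pistorius model); and the roots are related by
`s(t) = p₁(q⁺(q(p₁-p₂)) - q)`. -/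
theorem stmt19 {Ω : Type*} [MeasurableSpace Ω] (μ : Measure Ω) [IsProbabilityMeasure μ]
    (lam p1 p2 : ℝ) (hlam : 0 < lam) (hp2 : 0 < p2) (hp : p2 < p1)
    (sig : Ω → ℝ) (hm : Measurable sig) (hnn : ∀ ω, 0 ≤ sig ω)
    (sigstar : ℝ → ℝ) (hsig : ∀ a : ℝ, sigstar a = ∫ ω, Real.exp (-a * sig ω) ∂μ)
    (φ : ℝ → ℝ → ℝ)
    (hφ : ∀ s t : ℝ, φ s t = ∫ ω, Real.exp (-s * (sig ω / p2) - t * (sig ω / p1)) ∂μ) :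
    (∀ s t : ℝ, φ s t = sigstar (s / p2 + t / p1)) ∧
    (∀ p q a : ℝ, a = p + q →
      (lam * φ (p2 * q) (p1 * p) = lam - (p1 * p + p2 * q) ↔
        p1 * a - lam * (1 - sigstar a) = q * (p1 - p2))) ∧
    (∀ q a : ℝ, p1 * a - lam * (1 - sigstar a) = q * (p1 - p2) →
      lam * φ (p2 * q) (p1 * (a - q)) = lam - (p1 * (a - q) + p2 * q)) := by
  have hp1 : (0:ℝ) < p1 := lt_trans hp2 hp
  have key : ∀ s t : ℝ, φ s t = sigstar (s / p2 + t / p1) := by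
    intro s t
    rw [hφ, hsig]
    congr 1; funext ω
    congr 1
    field_simp
    ring
  have harg : ∀ p q : ℝ, φ (p2 * q) (p1 * p) = sigstar (p + q) := by
    intro p q
    rw [key]
    congr 1
    field_simp
    ring
  refine ⟨key, ?_, ?_⟩
  · intro p q a ha
    rw [harg, ← ha]
    constructor <;> intro h <;> nlinarith [h]
  · intro q a h
    rw [harg]
    have : (a - q) + q = a := by ring
    rw [this]
    nlinarith [h]
end
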